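/- arXiv:1707.01255 — 3 statements merged into one kernel-verified Lean document; each statement's English description precedes it below -/
import Mathlib

section
/- For any multi-indices i, j : Fin 3 → ℕ with |i| = |j| = N, the Gram matrix entry of the triangular Bernstein basis satisfies ∫_Ω B_i^N(s,t) B_j^N(s,t) ds dt = (C(N,i) · C(N,j) / C(2N, i+j)) · 1/((2N+1)(2N+2)), where C(N,i) = N!/((i 0)! (i 1)! (i 2)!). -/
open MeasureTheory Finset

/-- The multinomial coefficient `n! / ∏ l, (i l)!` as a real number. -/
noncomputable def mcoef {L : ℕ} (n : ℕ) (i : Fin L → ℕ) : ℝ :=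
  (n.factorial : ℝ) / ∏ l, ((i l).factorial : ℝ)

/-- The Bernstein basis polynomial of degree `n` for the multi-index `i`,
as a function of barycentric coordinates `β : Fin L → ℝ`. -/
noncomputable def bern {L : ℕ} (n : ℕ) (i : Fin L → ℕ) (β : Fin L → ℝ) : ℝ :=
  mcoef n i * ∏ l, β l ^ i l

/-- The triangular Bernstein basis polynomial of degree `n` for a multi-index
`i : Fin 3 → ℕ`, as a function on `ℝ²`. -/
noncomputable def triBern (n : ℕ) (i : Fin 3 → ℕ) (x : ℝ × ℝ) : ℝ :=
  mcoef n i * (x.1 ^ i 0 * x.2 ^ i 1 * (1 - x.1 - x.2) ^ i 2)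

/-- The tetrahedral Bernstein basis polynomial of degree `m` for a multi-index
`j : Fin 4 → ℕ`, as a function on `ℝ⁴`. -/
noncomputable def tetBern (m : ℕ) (j : Fin 4 → ℕ) (u : Fin 4 → ℝ) : ℝ :=
  mcoef m j * ∏ l, u l ^ j l

/-- The standard triangle `Ω = {(s,t) : 0 ≤ s, 0 ≤ t, s + t ≤ 1}` in `ℝ²`. -/
def Omega : Set (ℝ × ℝ) := {x | 0 ≤ x.1 ∧ 0 ≤ x.2 ∧ x.1 + x.2 ≤ 1}

/-- `p : ℝ² → ℝ⁴` has components that are real polynomials in `(s,t)` of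
total degree at most `n`. -/
def PolyComponents (n : ℕ) (p : ℝ × ℝ → Fin 4 → ℝ) : Prop :=
  ∀ l : Fin 4, ∃ P : MvPolynomial (Fin 2) ℝ, P.totalDegree ≤ n ∧
    ∀ x : ℝ × ℝ, p x l = MvPolynomial.eval ![x.1, x.2] P

/-!
The product `B_i^N B_j^N` equals `C(N,i) C(N,j) / C(2N,i+j) · B_{i+j}^{2N}`, and every Bernstein
polynomial `B_k^n` integrates over `Ω` to `1 / ((n+1)(n+2))`. The latter is the Dirichlet integral
`∫_Ω s^a t^b (1-s-t)^c = a! b! c! / (a+b+c+2)!`, which Fubini and the substitution `t = (1-s) x`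
reduce to two Beta integrals `∫₀¹ x^a (1-x)^b dx = a! b! / (a+b+1)!`.
-/

open scoped Nat

theorem integral_pow_mul_one_sub_pow (a b : ℕ) :
    ∫ x in (0 : ℝ)..1, x ^ a * (1 - x) ^ b = (a ! * b ! : ℝ) / (a + b + 1)! := by
  induction b generalizing a with
  | zero =>
    simp only [pow_zero, mul_one, integral_pow, Nat.factorial_zero, Nat.cast_one, add_zero]
    rw [Nat.factorial_succ]
    push_cast
    field_simp
    simp
  | succ b ih =>
    have hsplit : ∀ x : ℝ, x ^ a * (1 - x) ^ (b + 1) =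
        x ^ a * (1 - x) ^ b - x ^ (a + 1) * (1 - x) ^ b := fun x => by ring
    simp_rw [hsplit]
    have hcont : ∀ k, Continuous fun x : ℝ => x ^ k * (1 - x) ^ b := fun k => by fun_prop
    rw [intervalIntegral.integral_sub ((hcont a).intervalIntegrable 0 1)
      ((hcont (a + 1)).intervalIntegrable 0 1), ih, ih,
      show a + 1 + b + 1 = a + b + 1 + 1 by ring, show a + (b + 1) + 1 = a + b + 1 + 1 by ring]
    simp only [Nat.factorial_succ]
    push_cast
    field_simp
    ring

theorem integral_pow_mul_sub_pow (u : ℝ) (a b : ℕ) :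
    ∫ t in (0 : ℝ)..u, t ^ a * (u - t) ^ b =
      u ^ (a + b + 1) * ((a ! * b ! : ℝ) / (a + b + 1)!) := by
  have hscale : ∀ x : ℝ,
      u * ((u * x) ^ a * (u - u * x) ^ b) = u ^ (a + b + 1) * (x ^ a * (1 - x) ^ b) := fun x => by
    rw [show u - u * x = u * (1 - x) by ring, mul_pow, mul_pow]; ring
  rw [← integral_pow_mul_one_sub_pow, ← intervalIntegral.integral_const_mul, ← funext hscale,
    intervalIntegral.integral_const_mul,
    intervalIntegral.mul_integral_comp_mul_left (f := fun t => t ^ a * (u - t) ^ b)]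
  simp

theorem isCompact_Omega : IsCompact Omega := by
  refine (isCompact_Icc (a := ((0 : ℝ), (0 : ℝ))) (b := (1, 1))).of_isClosed_subset ?_ ?_
  · exact (isClosed_le continuous_const continuous_fst).inter
      ((isClosed_le continuous_const continuous_snd).inter
        (isClosed_le (continuous_fst.add continuous_snd) continuous_const))
  · rintro ⟨s, t⟩ ⟨hs, ht, hst⟩
    exact ⟨⟨hs, ht⟩, by constructor <;> dsimp at * <;> linarith⟩

theorem measurableSet_Omega : MeasurableSet Omega :=
  isCompact_Omega.isClosed.measurableSet

theorem integral_indicator_Omega_slice (F : ℝ × ℝ → ℝ) (s : ℝ) :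
    ∫ t, Omega.indicator F (s, t) =
      (Set.Icc 0 1).indicator (fun s => ∫ t in (0 : ℝ)..(1 - s), F (s, t)) s := by
  by_cases hs : s ∈ Set.Icc (0 : ℝ) 1
  · rw [Set.indicator_of_mem hs, intervalIntegral.integral_of_le (by linarith [hs.2]),
      ← integral_Icc_eq_integral_Ioc, ← integral_indicator measurableSet_Icc]
    congr 1 with t
    simp only [Set.indicator_apply, Omega, Set.mem_ofPred_eq, Set.mem_Icc]
    congr 1
    grind
  · rw [Set.indicator_of_notMem hs, ← integral_zero ℝ ℝ]
    congr 1 with t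
    refine Set.indicator_of_notMem ?_ F
    rintro ⟨hs₀, ht₀, hst⟩
    exact hs ⟨hs₀, by dsimp at ht₀ hst; linarith⟩

theorem setIntegral_Omega_eq_iterated {F : ℝ × ℝ → ℝ} (hF : Continuous F) :
    ∫ x in Omega, F x = ∫ s in (0 : ℝ)..1, ∫ t in (0 : ℝ)..(1 - s), F (s, t) := by
  have hint : Integrable (Omega.indicator F) (volume.prod volume) :=
    (hF.continuousOn.integrableOn_compact isCompact_Omega).integrable_indicator measurableSet_Omega
  rw [← integral_indicator measurableSet_Omega, Measure.volume_eq_prod, integral_prod _ hint]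
  simp_rw [integral_indicator_Omega_slice]
  rw [integral_indicator measurableSet_Icc, integral_Icc_eq_integral_Ioc,
    ← intervalIntegral.integral_of_le zero_le_one]

theorem setIntegral_Omega_monomial (a b c : ℕ) :
    ∫ x in Omega, x.1 ^ a * x.2 ^ b * (1 - x.1 - x.2) ^ c =
      (a ! * b ! * c ! : ℝ) / (a + b + c + 2)! := by
  rw [setIntegral_Omega_eq_iterated (by fun_prop)]
  have hinner : ∀ s : ℝ, ∫ t in (0 : ℝ)..(1 - s), s ^ a * t ^ b * (1 - s - t) ^ c =
      ((b ! * c ! : ℝ) / (b + c + 1)!) * (s ^ a * (1 - s) ^ (b + c + 1)) := fun s => by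
    simp_rw [mul_assoc (s ^ a)]
    rw [intervalIntegral.integral_const_mul, integral_pow_mul_sub_pow]
    ring
  simp_rw [hinner]
  rw [intervalIntegral.integral_const_mul, integral_pow_mul_one_sub_pow,
    show a + (b + c + 1) + 1 = a + b + c + 2 by ring]
  field_simp

theorem mcoef_ne_zero {L : ℕ} (n : ℕ) (i : Fin L → ℕ) : mcoef n i ≠ 0 := by
  unfold mcoef
  exact div_ne_zero (by positivity) (prod_ne_zero_iff.mpr fun l _ => by positivity)

theorem triBern_mul_triBern (n m : ℕ) (i j : Fin 3 → ℕ) (x : ℝ × ℝ) :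
    triBern n i x * triBern m j x =
      mcoef n i * mcoef m j / mcoef (n + m) (i + j) * triBern (n + m) (i + j) x := by
  have := mcoef_ne_zero (n + m) (i + j)
  simp only [triBern, Pi.add_apply, pow_add]
  field_simp

theorem setIntegral_Omega_triBern (n : ℕ) (i : Fin 3 → ℕ) (hi : i 0 + i 1 + i 2 = n) :
    ∫ x in Omega, triBern n i x = 1 / ((n + 1) * (n + 2)) := by
  simp only [triBern]
  rw [integral_const_mul, setIntegral_Omega_monomial, hi, mcoef, Fin.prod_univ_three,
    Nat.factorial_succ (n + 1), Nat.factorial_succ n]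
  push_cast
  field_simp
  ring

/-- Gram matrix entries of the triangular Bernstein basis. -/
theorem triBern_gram (N : ℕ) (i j : Fin 3 → ℕ)
    (hi : i 0 + i 1 + i 2 = N) (hj : j 0 + j 1 + j 2 = N) :
    ∫ x in Omega, triBern N i x * triBern N j x =
      (mcoef N i * mcoef N j / mcoef (2 * N) (i + j)) *
        (1 / ((2 * (N : ℝ) + 1) * (2 * (N : ℝ) + 2))) := by
  simp_rw [triBern_mul_triBern, integral_const_mul, two_mul]
  rw [setIntegral_Omega_triBern _ _ (by simp only [Pi.add_apply]; omega)]
  push_cast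
  ring
end

section
/- Let p : ℝ² → ℝ⁴ have polynomial components of total degree at most n, and let D = (d_{j,k}) satisfy B_j^m(p(s,t)) = Σ_{|k|=mn} d_{j,k} B_k^{mn}(s,t) for all (s,t) ∈ ℝ² and all |j| = m. Then for every coefficient vector b : {j : Fin 4 → ℕ // |j| = m} → ℝ, the polynomial q_b(u) = Σ_{|j|=m} b_j B_j^m(u) satisfies sup_{(s,t)∈Ω} |q_b(p(s,t))| ≤ ‖D b‖, where ‖D b‖ is the Euclidean norm of the vector with entries (Db)_k = Σ_{|j|=m} d_{j,k} b_j. -/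
/-!
Substituting the Bernstein representation of each `B_j^m ∘ p` turns `q_b ∘ p` into
`∑ k, (D b)_k B_k^{mn}`. On `Ω` the barycentric coordinates `(s, t, 1 - s - t)` are
nonnegative and sum to `1`, so by the multinomial theorem the `B_k^{mn}(s,t)` are nonnegative
weights with sum `1`; Cauchy–Schwarz together with `∑ w_k² ≤ (∑ w_k)² = 1` then bounds the
weighted sum by `‖D b‖`.
-/

open MeasureTheory Finset

lemma mcoef_eq_multinomial {L n : ℕ} {i : Fin L → ℕ} (hi : ∑ l, i l = n) :
    mcoef n i = Nat.multinomial univ i := by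
  subst hi
  rw [mcoef, Nat.multinomial, Nat.cast_div (Nat.prod_factorial_dvd_factorial_sum _ _)
    (by positivity), Nat.cast_prod]

lemma bern_nonneg {L : ℕ} (n : ℕ) (i : Fin L → ℕ) {β : Fin L → ℝ} (hβ : 0 ≤ β) :
    0 ≤ bern n i β := by
  unfold bern mcoef
  exact mul_nonneg (by positivity) (prod_nonneg fun l _ => pow_nonneg (hβ l) _)

lemma sum_bern {L : ℕ} (n : ℕ) (β : Fin L → ℝ) :
    ∑ i ∈ Nat.antidiagonalTuple L n, bern n i β = (∑ l, β l) ^ n := by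
  rw [sum_pow_eq_sum_piAntidiag, piAntidiag_univ_fin_eq_antidiagonalTuple]
  refine sum_congr rfl fun i hi => ?_
  rw [bern, mcoef_eq_multinomial (by simpa using Nat.mem_antidiagonalTuple.mp hi)]

lemma sum_bern_of_sum_eq_one {L : ℕ} (n : ℕ) {β : Fin L → ℝ} (hβ : ∑ l, β l = 1) :
    ∑ i ∈ Nat.antidiagonalTuple L n, bern n i β = 1 := by
  rw [sum_bern, hβ, one_pow]

def baryCoords (x : ℝ × ℝ) : Fin 3 → ℝ := ![x.1, x.2, 1 - x.1 - x.2]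

lemma triBern_eq_bern (n : ℕ) (k : Fin 3 → ℕ) (x : ℝ × ℝ) :
    triBern n k x = bern n k (baryCoords x) := by
  simp [triBern, bern, baryCoords, Fin.prod_univ_three]

lemma sum_baryCoords (x : ℝ × ℝ) : ∑ l, baryCoords x l = 1 := by
  simp [baryCoords, Fin.sum_univ_three]

lemma baryCoords_nonneg {x : ℝ × ℝ} (hx : x ∈ Omega) : 0 ≤ baryCoords x := by
  obtain ⟨h₁, h₂, h₃⟩ := hx
  intro l
  fin_cases l <;> simp [baryCoords] <;> linarith

lemma abs_sum_mul_le_sqrt_sum_sq {ι : Type*} (s : Finset ι) (c w : ι → ℝ)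
    (hw : ∀ i ∈ s, 0 ≤ w i) (hw₁ : ∑ i ∈ s, w i ≤ 1) :
    |∑ i ∈ s, c i * w i| ≤ Real.sqrt (∑ i ∈ s, c i ^ 2) := by
  have hw₂ : ∑ i ∈ s, w i ^ 2 ≤ 1 :=
    calc ∑ i ∈ s, w i ^ 2 ≤ (∑ i ∈ s, w i) ^ 2 := sum_sq_le_sq_sum_of_nonneg hw
      _ ≤ 1 := pow_le_one₀ (sum_nonneg hw) hw₁
  refine Real.abs_le_sqrt ?_
  calc (∑ i ∈ s, c i * w i) ^ 2 ≤ (∑ i ∈ s, c i ^ 2) * ∑ i ∈ s, w i ^ 2 :=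
        sum_mul_sq_le_sq_mul_sq s c w
    _ ≤ ∑ i ∈ s, c i ^ 2 :=
        mul_le_of_le_one_right (sum_nonneg fun i _ => sq_nonneg (c i)) hw₂

theorem original_error_bound_general (n m : ℕ) (p : ℝ × ℝ → Fin 4 → ℝ)
    (d : (Fin 4 → ℕ) → (Fin 3 → ℕ) → ℝ)
    (hD : ∀ j ∈ Finset.Nat.antidiagonalTuple 4 m, ∀ x : ℝ × ℝ,
      tetBern m j (p x) =
        ∑ k ∈ Finset.Nat.antidiagonalTuple 3 (m * n), d j k * triBern (m * n) k x)
    (b : (Fin 4 → ℕ) → ℝ) (x : ℝ × ℝ) (hx : x ∈ Omega) :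
    |∑ j ∈ Finset.Nat.antidiagonalTuple 4 m, b j * tetBern m j (p x)| ≤
      Real.sqrt (∑ k ∈ Finset.Nat.antidiagonalTuple 3 (m * n),
        (∑ j ∈ Finset.Nat.antidiagonalTuple 4 m, d j k * b j) ^ 2) := by
  have hexpand : ∑ j ∈ Nat.antidiagonalTuple 4 m, b j * tetBern m j (p x) =
      ∑ k ∈ Nat.antidiagonalTuple 3 (m * n),
        (∑ j ∈ Nat.antidiagonalTuple 4 m, d j k * b j) * triBern (m * n) k x := by
    simp_rw [sum_mul]
    rw [sum_comm]
    refine sum_congr rfl fun j hj => ?_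
    rw [hD j hj x, mul_sum]
    exact sum_congr rfl fun k _ => by ring
  rw [hexpand]
  simp_rw [triBern_eq_bern]
  exact abs_sum_mul_le_sqrt_sum_sq _ _ _ (fun k _ => bern_nonneg _ k (baryCoords_nonneg hx))
    (sum_bern_of_sum_eq_one _ (sum_baryCoords x)).le

/-- the pointwise algebraic error of `q_b` on `Ω` is bounded by
the Euclidean norm `‖D b‖`. -/
theorem original_error_bound (n m : ℕ) (p : ℝ × ℝ → Fin 4 → ℝ)
    (hp : PolyComponents n p) (d : (Fin 4 → ℕ) → (Fin 3 → ℕ) → ℝ)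
    (hD : ∀ j ∈ Finset.Nat.antidiagonalTuple 4 m, ∀ x : ℝ × ℝ,
      tetBern m j (p x) =
        ∑ k ∈ Finset.Nat.antidiagonalTuple 3 (m * n), d j k * triBern (m * n) k x)
    (b : (Fin 4 → ℕ) → ℝ) (x : ℝ × ℝ) (hx : x ∈ Omega) :
    |∑ j ∈ Finset.Nat.antidiagonalTuple 4 m, b j * tetBern m j (p x)| ≤
      Real.sqrt (∑ k ∈ Finset.Nat.antidiagonalTuple 3 (m * n),
        (∑ j ∈ Finset.Nat.antidiagonalTuple 4 m, d j k * b j) ^ 2) :=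
  original_error_bound_general n m p d hD b x hx
end

section
/- Let m, n be positive integers such that the number C(m+3,3) of multi-indices j : Fin 4 → ℕ with |j| = m strictly exceeds the number C(mn+2,2) of multi-indices k : Fin 3 → ℕ with |k| = mn. Then for every map p : ℝ² → ℝ⁴ whose components are polynomials of total degree at most n, there exists a nonzero coefficient vector b such that the polynomial q_b(u) = Σ_{|j|=m} b_j B_j^m(u) satisfies q_b(p(s,t)) = 0 for all (s,t) ∈ ℝ²; that is, an exact implicit representation of degree m exists. -/
open MeasureTheory Finset

/-! The polynomial `s, t ↦ q_b (p (s, t))` has degree at most `m n` and depends linearly on `b`.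
Polynomials of degree at most `m n` in two variables form a space of dimension `C(mn+2, 2)`,
smaller than the number `C(m+3, 3)` of coefficients `b`, so some `b ≠ 0` is sent to zero. -/

open MvPolynomial Module

theorem Finset.Nat.card_antidiagonalTuple (k n : ℕ) :
    #(Finset.Nat.antidiagonalTuple k n) = (k + n - 1).choose n := by
  have h := card_finsuppAntidiag_nat_eq_choose (s := (univ : Finset (Fin k))) n
  rw [card_univ, Fintype.card_fin] at h
  rw [← h]
  refine card_nbij' (fun f => Finsupp.equivFunOnFinite.symm f) (fun g => ⇑g) ?_ ?_ ?_ ?_ <;>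
    intro f hf <;> simp_all [Nat.mem_antidiagonalTuple]

/-- Append the slack `D - |d|` as a last coordinate. -/
noncomputable def sumLeEquivAntidiagonalTuple (k D : ℕ) :
    {d : Fin k →₀ ℕ | (d.sum fun _ e => e) ≤ D} ≃ Finset.Nat.antidiagonalTuple (k + 1) D where
  toFun d := ⟨Fin.snoc (⇑d.1) (D - d.1.sum fun _ e => e), by
    rw [Finset.Nat.mem_antidiagonalTuple, Fin.sum_univ_castSucc]
    simp only [Fin.snoc_castSucc, Fin.snoc_last]
    have := d.2
    rw [Set.mem_ofPred_eq, Finsupp.sum_fintype _ _ (fun _ => rfl)] at this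
    rw [Finsupp.sum_fintype _ _ (fun _ => rfl)]
    omega⟩
  invFun f := ⟨Finsupp.equivFunOnFinite.symm (Fin.init f.1), by
    have := Finset.Nat.mem_antidiagonalTuple.1 f.2
    rw [Fin.sum_univ_castSucc] at this
    rw [Set.mem_ofPred_eq, Finsupp.sum_fintype _ _ (fun _ => rfl)]
    simp only [Finsupp.equivFunOnFinite_symm_apply_apply, Fin.init]
    omega⟩
  left_inv d := by ext; simp
  right_inv f := by
    ext i
    have := Finset.Nat.mem_antidiagonalTuple.1 f.2
    rw [Fin.sum_univ_castSucc] at this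
    refine Fin.lastCases ?_ (fun i => ?_) i
    · simp only [Finsupp.coe_equivFunOnFinite_symm, Finsupp.sum_fintype,
        Finsupp.equivFunOnFinite_symm_apply_apply, Fin.init, Fin.snoc_last, implies_true]
      omega
    · simp [Fin.init]

theorem MvPolynomial.finrank_restrictTotalDegree_fin (K : Type*) [Field K] (k D : ℕ) :
    finrank K (restrictTotalDegree (Fin k) K D) = (k + D).choose k := by
  rw [restrictTotalDegree, finrank_eq_nat_card_basis (basisRestrictSupport K _),
    Nat.card_congr (sumLeEquivAntidiagonalTuple k D), Nat.card_eq_fintype_card,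
    Fintype.card_coe, Finset.Nat.card_antidiagonalTuple, show k + 1 + D - 1 = k + D by omega,
    Nat.choose_symm_add]

theorem Submodule.exists_nontrivial_relation_of_finrank_lt_card {K V ι : Type*} [Field K]
    [AddCommGroup V] [Module K V] {W : Submodule K V} [FiniteDimensional K W] {s : Finset ι}
    {v : ι → V} (hv : ∀ i ∈ s, v i ∈ W) (h : finrank K W < #s) :
    ∃ f : ι → K, ∑ i ∈ s, f i • v i = 0 ∧ ∃ i ∈ s, f i ≠ 0 := by
  rw [← not_linearIndepOn_finset_iff]
  intro hli
  have hspan : Submodule.span K (Set.range fun i : (s : Set ι) => v i) ≤ W :=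
    Submodule.span_le.2 <| Set.range_subset_iff.2 fun i => hv i.1 i.2
  have := Submodule.finrank_mono hspan
  rw [finrank_span_eq_card hli] at this
  simp only [Finset.coe_sort_coe, Fintype.card_coe] at this
  omega

theorem MvPolynomial.totalDegree_prod_pow_le {R σ ι : Type*} [CommSemiring R] [Fintype ι]
    {P : ι → MvPolynomial σ R} {n : ℕ} (hP : ∀ l, (P l).totalDegree ≤ n) (j : ι → ℕ) :
    (∏ l, P l ^ j l).totalDegree ≤ (∑ l, j l) * n := by
  refine (totalDegree_finsetProd _ _).trans ?_
  rw [Finset.sum_mul]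
  exact Finset.sum_le_sum fun l _ =>
    (totalDegree_pow _ _).trans (Nat.mul_le_mul_left _ (hP l))

noncomputable def tetBernComp {σ : Type*} (m : ℕ) (j : Fin 4 → ℕ)
    (P : Fin 4 → MvPolynomial σ ℝ) : MvPolynomial σ ℝ :=
  C (mcoef m j) * ∏ l, P l ^ j l

section tetBernComp

variable {σ : Type*} (m : ℕ) (j : Fin 4 → ℕ) (P : Fin 4 → MvPolynomial σ ℝ)

theorem eval_tetBernComp (x : σ → ℝ) :
    eval x (tetBernComp m j P) = tetBern m j fun l => eval x (P l) := by
  simp [tetBernComp, tetBern]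

theorem tetBernComp_mem_restrictTotalDegree {n : ℕ} (hP : ∀ l, (P l).totalDegree ≤ n)
    (hj : j ∈ Finset.Nat.antidiagonalTuple 4 m) :
    tetBernComp m j P ∈ restrictTotalDegree σ ℝ (m * n) := by
  rw [mem_restrictTotalDegree, ← Finset.Nat.mem_antidiagonalTuple.1 hj]
  exact (totalDegree_mul _ _).trans <| by
    rw [totalDegree_C, zero_add]; exact totalDegree_prod_pow_le hP j

end tetBernComp

theorem exists_exact_implicitization_general (m n : ℕ)
    (hcard : Nat.choose (m * n + 2) 2 < Nat.choose (m + 3) 3)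
    (p : ℝ × ℝ → Fin 4 → ℝ) (hp : PolyComponents n p) :
    ∃ b : (Fin 4 → ℕ) → ℝ,
      (∃ j ∈ Finset.Nat.antidiagonalTuple 4 m, b j ≠ 0) ∧
      ∀ x : ℝ × ℝ,
        ∑ j ∈ Finset.Nat.antidiagonalTuple 4 m, b j * tetBern m j (p x) = 0 := by
  choose P hPdeg hPeval using hp
  have hdim : finrank ℝ (restrictTotalDegree (Fin 2) ℝ (m * n)) <
      #(Finset.Nat.antidiagonalTuple 4 m) := by
    rwa [finrank_restrictTotalDegree_fin, Finset.Nat.card_antidiagonalTuple, add_comm 2,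
      show 4 + m - 1 = m + 3 by omega, Nat.choose_symm_add]
  obtain ⟨b, hb, j, hj, hbj⟩ := Submodule.exists_nontrivial_relation_of_finrank_lt_card
    (fun j hj => tetBernComp_mem_restrictTotalDegree m j P hPdeg hj) hdim
  refine ⟨b, ⟨j, hj, hbj⟩, fun x => ?_⟩
  have hpx : p x = fun l => eval ![x.1, x.2] (P l) := funext fun l => hPeval l x
  simpa [map_sum, eval_tetBernComp, hpx] using congrArg (eval ![x.1, x.2]) hb

/-- if `C(m+3,3) > C(mn+2,2)` then every polynomial surface of
degree at most `n` admits an exact implicit representation of degree `m`. -/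
theorem exists_exact_implicitization (m n : ℕ) (hm : 0 < m) (hn : 0 < n)
    (hcard : Nat.choose (m * n + 2) 2 < Nat.choose (m + 3) 3)
    (p : ℝ × ℝ → Fin 4 → ℝ) (hp : PolyComponents n p) :
    ∃ b : (Fin 4 → ℕ) → ℝ,
      (∃ j ∈ Finset.Nat.antidiagonalTuple 4 m, b j ≠ 0) ∧
      ∀ x : ℝ × ℝ,
        ∑ j ∈ Finset.Nat.antidiagonalTuple 4 m, b j * tetBern m j (p x) = 0 :=
  exists_exact_implicitization_general m n hcard p hp
end
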